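/- arXiv:1404.6727 — 4 statements merged into one kernel-verified Lean document; each statement's English description precedes it below -/
import Mathlib

section
/- Suppose prices are multiplicative, p_{ij} = p_i q_j with p_i, q_j > 0. Then a set S ⊆ [m]×[n] can be captured exactly (i.e., there exist multipliers r, c with r_i c_j ≥ p_{ij} iff (i,j) ∈ S) only if S is a staircase: for any two columns j₁, j₂, the set of rows of S in column j₁ is a subset or a superset of the set of rows of S in column j₂. -/
/-! If `S` contained a cross `(i₁, j₁), (i₂, j₂)` without its corners `(i₁, j₂), (i₂, j₁)`, then
multiplying the two capture inequalities and the two strict non-capture inequalities gives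
`(r₁c₁)(r₂c₂) ≥ (p₁q₁)(p₂q₂)` and `(r₁c₂)(r₂c₁) < (p₁q₂)(p₂q₁)`; but both sides are the same
products regrouped, a contradiction. -/

theorem Set.subset_or_subset_of_forall_mem_or_mem {α : Type*} {A B : Set α}
    (h : ∀ a ∈ A, ∀ b ∈ B, a ∈ B ∨ b ∈ A) : A ⊆ B ∨ B ⊆ A := by
  by_contra! hAB
  obtain ⟨⟨a, haA, haB⟩, ⟨b, hbB, hbA⟩⟩ := And.imp Set.not_subset.mp Set.not_subset.mp hAB
  exact (h a haA b hbB).elim haB hbA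

theorem le_or_le_of_cross_le {R : Type*} [CommRing R] [LinearOrder R] [IsStrictOrderedRing R]
    {p₁ p₂ q₁ q₂ r₁ r₂ c₁ c₂ : R} (hp₂ : 0 ≤ p₂) (hq₂ : 0 ≤ q₂)
    (hr₁ : 0 ≤ r₁) (hr₂ : 0 ≤ r₂) (hc₁ : 0 ≤ c₁) (hc₂ : 0 ≤ c₂)
    (h₁₁ : p₁ * q₁ ≤ r₁ * c₁) (h₂₂ : p₂ * q₂ ≤ r₂ * c₂) :
    p₁ * q₂ ≤ r₁ * c₂ ∨ p₂ * q₁ ≤ r₂ * c₁ := by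
  by_contra! h
  obtain ⟨h₁₂, h₂₁⟩ := h
  have := calc
    (p₁ * q₂) * (p₂ * q₁) = (p₁ * q₁) * (p₂ * q₂) := by ring
    _ ≤ (r₁ * c₁) * (r₂ * c₂) := mul_le_mul h₁₁ h₂₂ (by positivity) (by positivity)
    _ = (r₁ * c₂) * (r₂ * c₁) := by ring
    _ < (p₁ * q₂) * (p₂ * q₁) := mul_lt_mul'' h₁₂ h₂₁ (by positivity) (by positivity)
  exact lt_irrefl _ this

/-- With multiplicative prices p_{ij} = p_i q_j (p_i, q_j > 0), any set S that is
captured exactly by nonnegative multipliers must be a staircase: the row sets of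
any two columns are comparable under inclusion. -/
theorem stmt_8 (m n : ℕ) (p : Fin m → ℝ) (q : Fin n → ℝ)
    (hp : ∀ i, 0 < p i) (hq : ∀ j, 0 < q j)
    (S : Set (Fin m × Fin n)) (r : Fin m → ℝ) (c : Fin n → ℝ)
    (hr : ∀ i, 0 ≤ r i) (hc : ∀ j, 0 ≤ c j)
    (hcap : ∀ i j, (i, j) ∈ S ↔ r i * c j ≥ p i * q j) :
    ∀ j₁ j₂ : Fin n,
      {i | (i, j₁) ∈ S} ⊆ {i | (i, j₂) ∈ S} ∨ {i | (i, j₂) ∈ S} ⊆ {i | (i, j₁) ∈ S} := by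
  intro j₁ j₂
  refine Set.subset_or_subset_of_forall_mem_or_mem fun i₁ h₁ i₂ h₂ => ?_
  simp only [Set.mem_ofPred_eq, hcap, ge_iff_le] at h₁ h₂ ⊢
  exact le_or_le_of_cross_le (hp i₂).le (hq j₂).le (hr i₁) (hr i₂) (hc j₁) (hc j₂) h₁ h₂
end

section
/- If prices are multiplicative, p_{ij} = p_i q_j with p_i, q_j > 0, then any staircase S ⊆ [m]×[n] can be captured exactly: there exist nonnegative multipliers r, c such that r_i c_j ≥ p_{ij} if and only if (i,j) ∈ S. -/
/-!
Rank the columns by their size `w j = #{i | (i, j) ∈ S} + 1`. Since the columns of a staircase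
form a chain, a smaller column is contained in a larger one, so every row of `S` is an upper set
for this ranking: row `i` consists exactly of the columns with `w j ≥ a i`, where `a i` is the
least weight occurring in the row. Taking `c j = q j * w j` and `r i = p i / a i` (or `r i = 0`
for an empty row) then captures `S` exactly.
-/

open Finset

lemma Set.subset_of_ncard_le_of_total {α : Type*} {s t : Set α} (htot : s ⊆ t ∨ t ⊆ s)
    (hcard : s.ncard ≤ t.ncard) (hs : s.Finite) : s ⊆ t := by
  rcases htot with hst | hts
  · exact hst
  · exact (Set.eq_of_subset_of_ncard_le hts hcard hs).ge

lemma exists_nonneg_row_weights_of_upward_closed {α β : Type*} [Fintype β]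
    (S : Set (α × β)) (w : β → ℝ) (hw : ∀ j, 0 < w j)
    (hup : ∀ i j₁ j₂, (i, j₁) ∈ S → w j₁ ≤ w j₂ → (i, j₂) ∈ S) :
    ∃ r : α → ℝ, (∀ i, 0 ≤ r i) ∧ ∀ i j, (i, j) ∈ S ↔ 1 ≤ r i * w j := by
  classical
  let row : α → Finset β := fun i => univ.filter fun j => (i, j) ∈ S
  refine ⟨fun i => if h : (row i).Nonempty then ((row i).inf' h w)⁻¹ else 0, fun i => ?_,
    fun i j => ?_⟩
  · dsimp only
    split_ifs with h
    · exact inv_nonneg.mpr ((lt_inf'_iff h).mpr fun j _ => hw j).le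
    · exact le_rfl
  · dsimp only
    by_cases h : (row i).Nonempty
    · rw [dif_pos h, one_le_inv_mul₀ ((lt_inf'_iff h).mpr fun j _ => hw j), inf'_le_iff]
      constructor
      · intro hij
        exact ⟨j, by simpa [row] using hij, le_rfl⟩
      · rintro ⟨j', hj', hle⟩
        exact hup i j' j (by simpa [row] using hj') hle
    · rw [dif_neg h, zero_mul]
      exact iff_of_false (fun hij => h ⟨j, by simpa [row] using hij⟩) (by norm_num)

/-- With multiplicative prices p_{ij} = p_i q_j (p_i, q_j > 0), every staircase
S (columns totally ordered by inclusion of their row sets) can be captured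
exactly by some nonnegative multipliers. -/
theorem stmt_9 (m n : ℕ) (p : Fin m → ℝ) (q : Fin n → ℝ)
    (hp : ∀ i, 0 < p i) (hq : ∀ j, 0 < q j)
    (S : Set (Fin m × Fin n))
    (hstair : ∀ j₁ j₂ : Fin n,
      {i | (i, j₁) ∈ S} ⊆ {i | (i, j₂) ∈ S} ∨ {i | (i, j₂) ∈ S} ⊆ {i | (i, j₁) ∈ S}) :
    ∃ (r : Fin m → ℝ) (c : Fin n → ℝ),
      (∀ i, 0 ≤ r i) ∧ (∀ j, 0 ≤ c j) ∧
      ∀ i j, (i, j) ∈ S ↔ r i * c j ≥ p i * q j := by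
  let w : Fin n → ℝ := fun j => {i | (i, j) ∈ S}.ncard + 1
  have hw : ∀ j, 0 < w j := fun j => by positivity
  have hup : ∀ i j₁ j₂, (i, j₁) ∈ S → w j₁ ≤ w j₂ → (i, j₂) ∈ S := fun i j₁ j₂ hi hle =>
    Set.subset_of_ncard_le_of_total (hstair j₁ j₂)
      (by simpa [w] using hle) (Set.toFinite _) hi
  obtain ⟨r, hr, hrw⟩ := exists_nonneg_row_weights_of_upward_closed S w hw hup
  refine ⟨fun i => p i * r i, fun j => q j * w j, fun i => mul_nonneg (hp i).le (hr i),
    fun j => mul_nonneg (hq j).le (hw j).le, fun i j => ?_⟩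
  rw [hrw, ge_iff_le, show p i * r i * (q j * w j) = p i * q j * (r i * w j) by ring,
    le_mul_iff_one_le_right (mul_pos (hp i) (hq j))]
end

section
/- In the O(log m) tower-building algorithm, if the row price multipliers of consecutive strips differ by a factor of at least 2 (after rounding p_i down to powers of 2), then copying a tower of total cost C upward through all strips above it costs at most C(1/2 + 1/4 + ⋯) = C. Consequently, if the initial towers come from OPT(B/4) (cost ≤ B/4), the propagated solution costs at most B/2 before unrounding, and at most B with the original (unrounded) prices. -/
open Finset

section GeometricTail

variable {α : Type*} [Field α] [LinearOrder α] [IsStrictOrderedRing α]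

theorem sum_Icc_div_two_pow (C : α) (n : ℕ) :
    ∑ i ∈ Icc 1 n, C / 2 ^ i = C * (1 - 1 / 2 ^ n) := by
  induction n with
  | zero => simp
  | succ n ih =>
    rw [sum_Icc_succ_top (by omega), ih]
    field_simp
    ring

theorem sum_Icc_div_two_pow_le {C : α} (hC : 0 ≤ C) (n : ℕ) :
    ∑ i ∈ Icc 1 n, C / 2 ^ i ≤ C := by
  rw [sum_Icc_div_two_pow]
  have : 0 ≤ 1 / (2 : α) ^ n := by positivity
  nlinarith

theorem sum_Icc_le_of_le_div_two_pow {C : α} (hC : 0 ≤ C) {f : ℕ → α}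
    (hf : ∀ i, 1 ≤ i → f i ≤ C / 2 ^ i) (n : ℕ) :
    ∑ i ∈ Icc 1 n, f i ≤ C :=
  (sum_le_sum fun i hi => hf i (mem_Icc.mp hi).1).trans (sum_Icc_div_two_pow_le hC n)

end GeometricTail

theorem stmt_10_general (C B : ℝ) (hC : 0 ≤ C) (s : ℕ) (cost : ℕ → ℝ)
    (hcost : ∀ i, 1 ≤ i → cost i ≤ C / 2 ^ i)
    (hinit : C ≤ B / 4)
    (rounded unrounded : ℝ)
    (hrounded : rounded ≤ C + ∑ i ∈ Finset.Icc 1 s, cost i)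
    (hunrounded : unrounded ≤ 2 * rounded) :
    (∑ i ∈ Finset.Icc 1 s, cost i ≤ C) ∧ rounded ≤ B / 2 ∧ unrounded ≤ B := by
  have hcopies := sum_Icc_le_of_le_div_two_pow hC hcost s
  have hround : rounded ≤ B / 2 := by linarith
  exact ⟨hcopies, hround, by linarith⟩

/-- Geometric propagation cost: if the copy of a tower of cost C placed i strips
above it costs at most C/2^i (prices of consecutive strips differing by a factor
≥ 2 after rounding down to powers of 2), then all copies together cost at most
C(1/2 + 1/4 + ⋯) ≤ C.  Consequently, if C ≤ B/4 (towers from OPT(B/4)), the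
propagated solution costs at most B/2 in rounded prices, and at most B in the
original (unrounded) prices. -/
theorem stmt_10 (C B : ℝ) (hC : 0 ≤ C) (s : ℕ) (cost : ℕ → ℝ)
    (hcost_nonneg : ∀ i, 0 ≤ cost i)
    (hcost : ∀ i, 1 ≤ i → cost i ≤ C / 2 ^ i)
    (hinit : C ≤ B / 4)
    (rounded unrounded : ℝ)
    (hrounded : rounded ≤ C + ∑ i ∈ Finset.Icc 1 s, cost i)
    (hunrounded : unrounded ≤ 2 * rounded) :
    (∑ i ∈ Finset.Icc 1 s, cost i ≤ C) ∧ rounded ≤ B / 2 ∧ unrounded ≤ B :=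
  stmt_10_general C B hC s cost hcost hinit rounded unrounded hrounded hunrounded
end

section
/- In Lemma 'area' with f(t) = 1/(t+1) on (0,m], A = ∫₀^m dt/(t+1) = log(m+1), for every h ∈ (0,m] the overlap of [0,h]×[0,A/h] with the region under f is O(A · log log m / log m); i.e., the factor Θ(log log m / log m) in the rectangle-covering lemma is tight. -/
/-!
Cutting the overlap at `s = h / (A + 1)`: on `[0, s]` the rectangle has area at most
`s · A / h ≤ 1`, and on `[s, h]` the region under `1 / (t + 1)` has area
`log ((h + 1) / (s + 1)) ≤ log (A + 1)`. So every overlap is at most `1 + log (A + 1)`,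
which for `A = log (m + 1)` is `O(log log m) = O(A · log log m / log m)`.
-/

open Real intervalIntegral

theorem integral_min_le_mul_add_integral {f : ℝ → ℝ} {a s b : ℝ} (c : ℝ)
    (hf : ContinuousOn f (Set.Icc a b)) (has : a ≤ s) (hsb : s ≤ b) :
    ∫ t in a..b, min (f t) c ≤ (s - a) * c + ∫ t in s..b, f t := by
  have hf' (x y : ℝ) (hx : a ≤ x) (hy : y ≤ b) (hxy : x ≤ y) :
      ContinuousOn f (Set.uIcc x y) :=
    hf.mono (by rw [Set.uIcc_of_le hxy]; exact Set.Icc_subset_Icc hx hy)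
  have hmin (x y : ℝ) (hx : a ≤ x) (hy : y ≤ b) (hxy : x ≤ y) :
      IntervalIntegrable (fun t => min (f t) c) MeasureTheory.volume x y :=
    ((hf' x y hx hy hxy).inf continuousOn_const).intervalIntegrable
  rw [← integral_add_adjacent_intervals (hmin a s le_rfl hsb has) (hmin s b has le_rfl hsb)]
  gcongr
  · calc ∫ t in a..s, min (f t) c ≤ ∫ _ in a..s, c :=
          integral_mono_on has (hmin a s le_rfl hsb has) intervalIntegrable_const
            fun _ _ => min_le_right _ _
      _ = (s - a) * c := by simp
  · exact integral_mono_on hsb (hmin s b has le_rfl hsb)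
      (hf' s b has le_rfl hsb).intervalIntegrable fun _ _ => min_le_left _ _

theorem integral_one_div_add_one {a b : ℝ} (ha : -1 < a) (hb : -1 < b) :
    ∫ t in a..b, 1 / (t + 1) = log ((b + 1) / (a + 1)) := by
  rw [integral_comp_add_right (fun t => 1 / t), integral_one_div_of_pos] <;> linarith

theorem integral_min_one_div_add_one_le {A h : ℝ} (hA : 0 ≤ A) (hh : 0 ≤ h) :
    ∫ t in (0 : ℝ)..h, min (1 / (t + 1)) (A / h) ≤ 1 + log (A + 1) := by
  have hs : 0 ≤ h / (A + 1) := by positivity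
  have hsh : h / (A + 1) ≤ h := div_le_self hh (by linarith)
  have hcont : ContinuousOn (fun t : ℝ => 1 / (t + 1)) (Set.Icc 0 h) :=
    continuousOn_const.div (by fun_prop) fun t ht => by linarith [ht.1]
  refine (integral_min_le_mul_add_integral _ hcont hs hsh).trans (add_le_add ?_ ?_)
  · rw [sub_zero, div_mul_div_comm]
    exact div_le_one_of_le₀ (by nlinarith) (by positivity)
  · rw [integral_one_div_add_one (by linarith) (by linarith)]
    apply log_le_log (by positivity)
    rw [div_le_iff₀ (by positivity)]
    field_simp
    nlinarith

theorem one_lt_log_three : 1 < log 3 := by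
  rw [lt_log_iff_exp_lt (by norm_num)]
  linarith [exp_one_lt_d9]

theorem log_add_one_add_one_le {m : ℝ} (hm : 3 ≤ m) : log (m + 1) + 1 ≤ 3 * log m := by
  have hlog : 1 ≤ log m := one_lt_log_three.le.trans (log_le_log (by norm_num) hm)
  have hsq : log (m + 1) ≤ 2 * log m := by
    rw [← log_rpow (by linarith)]
    exact log_le_log (by linarith) (by norm_num; nlinarith)
  linarith

theorem one_add_log_log_add_one_le {m : ℝ} (hm : 3 ≤ m) :
    1 + log (log (m + 1) + 1) ≤
      ((1 + log 3) / log (log 3) + 1) * log (m + 1) * log (log m) / log m := by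
  have hlog3 : 0 < log (log 3) := log_pos one_lt_log_three
  have hlogm : log 3 ≤ log m := log_le_log (by norm_num) hm
  have hlogm_pos : 0 < log m := by linarith [one_lt_log_three]
  have hloglogm : log (log 3) ≤ log (log m) := log_le_log (by linarith [one_lt_log_three]) hlogm
  have hmA : log m ≤ log (m + 1) := log_le_log (by linarith) (by linarith)
  have hlogA : log (log (m + 1) + 1) ≤ log 3 + log (log m) := by
    rw [← log_mul (by norm_num) (by linarith [one_lt_log_three])]
    exact log_le_log (by linarith [log_nonneg (by linarith : (1 : ℝ) ≤ m + 1)])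
      (log_add_one_add_one_le hm)
  have hconst : 1 + log 3 ≤ (1 + log 3) / log (log 3) * log (log m) := by
    rw [div_mul_eq_mul_div, le_div_iff₀ hlog3]
    gcongr
  calc 1 + log (log (m + 1) + 1)
      ≤ ((1 + log 3) / log (log 3) + 1) * log (log m) := by linarith
    _ = ((1 + log 3) / log (log 3) + 1) * log m * log (log m) / log m := by
        field_simp
    _ ≤ _ := by gcongr; linarith

/-- Tightness of the rectangle-covering lemma: for f(t) = 1/(t+1) on (0,m] with
A = ∫₀^m f = log(m+1), every h ∈ (0,m] has rectangle overlap
∫₀^h min(f t, A/h) dt at most O(A·log log m / log m). -/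
theorem stmt_16 :
    ∃ C > (0 : ℝ), ∀ m : ℕ, 3 ≤ m → ∀ A : ℝ, A = Real.log ((m : ℝ) + 1) →
      ∀ h ∈ Set.Ioc (0 : ℝ) (m : ℝ),
        (∫ t in (0 : ℝ)..h, min (1 / (t + 1)) (A / h)) ≤
          C * A * Real.log (Real.log m) / Real.log m := by
  have hlog3 : 0 < log (log 3) := log_pos one_lt_log_three
  refine ⟨(1 + log 3) / log (log 3) + 1, by positivity, ?_⟩
  rintro m hm A rfl h ⟨hh, -⟩
  have hm' : (3 : ℝ) ≤ m := by exact_mod_cast hm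
  have hA : 0 ≤ log ((m : ℝ) + 1) := log_nonneg (by linarith)
  exact (integral_min_one_div_add_one_le hA hh.le).trans (one_add_log_log_add_one_le hm')
end
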